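/- Extra variables destroy full abstraction even with constructors of every needed arity (Example 3): with FS = {f/1, h/1, g/1} and CS containing 0/0, 1/0, 2/0 (and a constructor of each arity up to the maximum function arity), for the program P = { f 1 → 2, h X → f (Y X) } (extra variable Y): for every partial pattern φ, 1 ∉ ⟦φ 0⟧^P ∪ ⟦φ 1⟧^P, hence ⟦h 0⟧^P = {⊥} = ⟦h 1⟧^P; but for the safe extension P' = P ⊎ { g 0 → 1 } one has 2 ∈ ⟦h 0⟧^{P'} while 2 ∉ ⟦h 1⟧^{P'}. -/

import Mathlib

/-- A signature: function symbols and constructor symbols, each with an arity. -/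
structure Sig where
  FS : Type
  CS : Type
  arityF : FS → ℕ
  arityC : CS → ℕ

/-- Applicative partial expressions over a signature.  Variables are natural
numbers and `bot` is the distinguished 0-ary constructor `⊥`. -/
inductive Exp (σ : Sig) : Type where
  | var : ℕ → Exp σ
  | fn : σ.FS → Exp σ
  | cn : σ.CS → Exp σ
  | bot : Exp σ
  | app : Exp σ → Exp σ → Exp σ

variable {σ : Sig}

/-- `applyList e [e1, …, en]` is the curried application `e e1 … en`. -/
def applyList (e : Exp σ) (es : List (Exp σ)) : Exp σ := es.foldl Exp.app e

/-- Partial patterns `Pat_⊥`. -/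
inductive IsPPat : Exp σ → Prop where
  | var (x : ℕ) : IsPPat (Exp.var x)
  | bot : IsPPat (Exp.bot : Exp σ)
  | capp (c : σ.CS) (ts : List (Exp σ)) (har : ts.length ≤ σ.arityC c)
      (hts : ∀ t ∈ ts, IsPPat t) : IsPPat (applyList (Exp.cn c) ts)
  | fapp (f : σ.FS) (ts : List (Exp σ)) (har : ts.length < σ.arityF f)
      (hts : ∀ t ∈ ts, IsPPat t) : IsPPat (applyList (Exp.fn f) ts)

/-- The constructor `⊥` does not occur in the expression. -/
def BotFree : Exp σ → Prop
  | .bot => False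
  | .app a b => BotFree a ∧ BotFree b
  | _ => True

/-- Total patterns `Pat`. -/
def IsPat (t : Exp σ) : Prop := IsPPat t ∧ BotFree t

/-- First-order patterns `FOPat`. -/
inductive IsFOPat : Exp σ → Prop where
  | var (x : ℕ) : IsFOPat (Exp.var x)
  | capp (c : σ.CS) (ts : List (Exp σ)) (har : ts.length = σ.arityC c)
      (hts : ∀ t ∈ ts, IsFOPat t) : IsFOPat (applyList (Exp.cn c) ts)

/-- The list of occurrences of variables in an expression. -/
def occVars : Exp σ → List ℕ
  | .var x => [x]
  | .app a b => occVars a ++ occVars b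
  | _ => []

/-- Applying a substitution to an expression. -/
def subst (θ : ℕ → Exp σ) : Exp σ → Exp σ
  | .var x => θ x
  | .fn f => .fn f
  | .cn c => .cn c
  | .bot => .bot
  | .app a b => .app (subst θ a) (subst θ b)

/-- Partial-pattern substitutions `PSubst_⊥`. -/
def PSub (θ : ℕ → Exp σ) : Prop := ∀ x, IsPPat (θ x)

/-- A program rule `f t1 … tn → r` (the left-hand side is `f` applied to `lhs`). -/
structure Rule (σ : Sig) where
  fn : σ.FS
  lhs : List (Exp σ)
  rhs : Exp σ

/-- Well-formedness of a rule: `f` is applied to as many arguments as its arity,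
the arguments form a linear tuple of total patterns. -/
def Rule.WF (r : Rule σ) : Prop :=
  r.lhs.length = σ.arityF r.fn ∧ (∀ t ∈ r.lhs, IsPat t) ∧
    (r.lhs.flatMap occVars).Nodup

/-- The rule has no extra variables: all variables of the right-hand side occur
in the left-hand side. -/
def Rule.NoExtra (r : Rule σ) : Prop :=
  ∀ x ∈ occVars r.rhs, x ∈ r.lhs.flatMap occVars

abbrev Program (σ : Sig) := Set (Rule σ)

/-- A program without extra variables, all whose rules are well formed. -/
def WFProg (P : Program σ) : Prop := ∀ r ∈ P, r.WF ∧ r.NoExtra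

/-- `h ∈ Σ` (a function symbol, a constructor symbol, or `⊥`). -/
def IsSymb : Exp σ → Prop
  | .fn _ => True
  | .cn _ => True
  | .bot => True
  | _ => False

/-- HOCRWL derivation trees for statements `e ⇒ t`, with rules
(B), (RR), (DC) and (OR). -/
inductive DTree (P : Program σ) : Exp σ → Exp σ → Type where
  | bot (e : Exp σ) : DTree P e Exp.bot
  | rr (x : ℕ) : DTree P (Exp.var x) (Exp.var x)
  | dc (h : Exp σ) (es ts : List (Exp σ)) (hsym : IsSymb h)
      (hlen : es.length = ts.length) (hpat : IsPPat (applyList h ts))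
      (ds : ∀ p ∈ es.zip ts, DTree P p.1 p.2) :
      DTree P (applyList h es) (applyList h ts)
  | opr (r : Rule σ) (hr : r ∈ P) (θ : ℕ → Exp σ) (hθ : PSub θ)
      (es as : List (Exp σ)) (t : Exp σ) (hlen : es.length = r.lhs.length)
      (ds : ∀ p ∈ es.zip (r.lhs.map (subst θ)), DTree P p.1 p.2)
      (d : DTree P (applyList (subst θ r.rhs) as) t) :
      DTree P (applyList (Exp.fn r.fn) (es ++ as)) t

/-- `P ⊢ e ⇒ t` is derivable in the HOCRWL proof calculus. -/
def Deriv (P : Program σ) (e t : Exp σ) : Prop := Nonempty (DTree P e t)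

/-- The HOCRWL denotation `⟦e⟧^P = { t ∈ Pat_⊥ | P ⊢ e ⇒ t }`. -/
def den (P : Program σ) (e : Exp σ) : Set (Exp σ) := {t | IsPPat t ∧ Deriv P e t}

/-- Observations: total patterns in the denotation. -/
def Obs (P : Program σ) (e : Exp σ) : Set (Exp σ) := {t | t ∈ den P e ∧ BotFree t}

/-- First-order observations: first-order patterns in the denotation. -/
def ObsFO (P : Program σ) (e : Exp σ) : Set (Exp σ) := {t | t ∈ den P e ∧ IsFOPat t}

/-- Contexts `C ::= [ ] | C e | e C`. -/
inductive Cntxt (σ : Sig) : Type where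
  | hole : Cntxt σ
  | appL : Cntxt σ → Exp σ → Cntxt σ
  | appR : Exp σ → Cntxt σ → Cntxt σ

/-- Filling the hole of a context with an expression. -/
def Cntxt.fill : Cntxt σ → Exp σ → Exp σ
  | .hole, e => e
  | .appL C e', e => .app (C.fill e) e'
  | .appR e' C, e => .app e' (C.fill e)

/-- Function symbols occurring in an expression. -/
def expFS : Exp σ → Set σ.FS
  | .fn f => {f}
  | .app a b => expFS a ∪ expFS b
  | _ => ∅

/-- Function symbols occurring in a rule. -/
def ruleFS (r : Rule σ) : Set σ.FS :=
  insert r.fn ((⋃ t ∈ r.lhs, expFS t) ∪ expFS r.rhs)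

/-- Function symbols occurring in a program. -/
def progFS (P : Program σ) : Set σ.FS := ⋃ r ∈ P, ruleFS r

/-- Function symbols defined by a program (roots of left-hand sides). -/
def defs (P : Program σ) : Set σ.FS := Rule.fn '' P

/-- `P'` is a safe extension of `(P, e)`: `P' = P ⊎ P''` where `P''` defines no
function symbol occurring in `P` or in `e`. -/
def SafeExt (P P' : Program σ) (e : Exp σ) : Prop :=
  ∃ P'' : Program σ, P' = P ∪ P'' ∧ Disjoint P P'' ∧
    Disjoint (defs P'') (expFS e ∪ progFS P)

/-- `e ∼ₙ e'` : `n`-extensional equivalence. -/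
def ExtEquiv (P : Program σ) (n : ℕ) (e e' : Exp σ) : Prop :=
  ∀ es : List (Exp σ), es.length = n →
    den P (applyList e es) = den P (applyList e' es)

/-- Function symbols of the Example 3 program: `f/1`, `h/1`, `g/1`. -/
inductive Ex3F where | f | h | g

/-- Constructor symbols of the Example 3 program: `0/0`, `1/0`, `2/0`, plus a
constructor `cu` of arity 1 (a constructor of each arity up to the maximum
arity of the function symbols). -/
inductive Ex3C where | c0 | c1 | c2 | cu

/-- The signature of the Example 3 program. -/
def ex3Sig : Sig where
  FS := Ex3F
  CS := Ex3C
  arityF := fun s => match s with | .f => 1 | .h => 1 | .g => 1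
  arityC := fun s => match s with | .c0 => 0 | .c1 => 0 | .c2 => 0 | .cu => 1

/-- The Example 3 program `P = { f 1 → 2, h X → f (Y X) }` (extra variable
`Y`). -/
def ex3Prog : Program ex3Sig :=
  { ⟨.f, [.cn .c1], .cn .c2⟩,
    ⟨.h, [.var 0], .app (.fn .f) (.app (.var 1) (.var 0))⟩ }

/-- The safe extension `P' = P ⊎ { g 0 → 1 }`. -/
def ex3Prog' : Program ex3Sig :=
  ex3Prog ∪ {⟨.g, [.cn .c0], .cn .c1⟩}

/-! Call an expression rigid if its head is not a function symbol: a rigid expression only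
evaluates to `⊥` or to an expression with the same head and the same number of arguments.
In `P` every right-hand side is headed by `2` or by `f`, and `f` only produces `2`, so an
expression evaluating to `1` is headed by `1`; being rigid, it is not an application. Hence
the premise `Y X ⇒ 1` of `f (Y X) ⇒ 2` always fails and `h` yields only `⊥`. In `P'` an
expression evaluating to `1` may also be headed by `g`. Taking `Y := g` gives `h 0 ⇒ 2`,
whereas `h 1 ⇒ 2` would need `g X ⇒ 1` with `1 ⇒ X ⇒ 0`, impossible since `1` is rigid. -/

namespace Exp

def head : Exp σ → Exp σ
  | .app a _ => a.head
  | e => e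

def args : Exp σ → List (Exp σ)
  | .app a b => a.args ++ [b]
  | _ => []

@[simp] theorem head_applyList (e : Exp σ) (es : List (Exp σ)) :
    (applyList e es).head = e.head := by
  induction es generalizing e with
  | nil => rfl
  | cons a es ih => exact (ih (.app e a)).trans rfl

@[simp] theorem args_applyList (e : Exp σ) (es : List (Exp σ)) :
    (applyList e es).args = e.args ++ es := by
  induction es generalizing e with
  | nil => simp [applyList]
  | cons a es ih =>
    show (applyList (.app e a) es).args = _
    simp [ih, args]

end Exp

theorem IsSymb.head_eq {h : Exp σ} (hh : IsSymb h) : h.head = h := by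
  cases h <;> simp_all [IsSymb, Exp.head]

theorem IsSymb.args_eq {h : Exp σ} (hh : IsSymb h) : h.args = [] := by
  cases h <;> simp_all [IsSymb, Exp.args]

theorem IsPPat.length_args_lt {e : Exp σ} {f : σ.FS} (hp : IsPPat e) (hf : e.head = .fn f) :
    e.args.length < σ.arityF f := by
  cases hp with
  | fapp g ts har =>
    obtain rfl : g = f := by simpa [Exp.head] using hf
    simpa [Exp.args] using har
  | _ => simp_all [Exp.head]

theorem IsPPat.eq_fn_of_head_eq {e : Exp σ} {f : σ.FS} (hp : IsPPat e) (hf : e.head = .fn f)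
    (h1 : σ.arityF f ≤ 1) : e = .fn f := by
  cases hp with
  | fapp g ts har =>
    obtain rfl : g = f := by simpa [Exp.head] using hf
    obtain rfl : ts = [] := List.length_eq_zero_iff.1 (by omega)
    rfl
  | _ => simp_all [Exp.head]

theorem IsPPat.cn (c : σ.CS) : IsPPat (.cn c : Exp σ) :=
  .capp c [] (Nat.zero_le _) (by simp)

theorem IsPPat.fn {f : σ.FS} (hf : 0 < σ.arityF f) : IsPPat (.fn f : Exp σ) :=
  .fapp f [] hf (by simp)

theorem den_eq_singleton_bot {P : Program σ} {e : Exp σ}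
    (h : ∀ t, Deriv P e t → t = .bot) : den P e = {.bot} := by
  ext t
  exact ⟨fun ht => h t ht.2, by rintro rfl; exact ⟨.bot, ⟨.bot e⟩⟩⟩

section Deriv

variable {P : Program σ}

theorem Deriv.cn_self (c : σ.CS) : Deriv P (.cn c) (.cn c) :=
  ⟨.dc (.cn c) [] [] trivial rfl (IsPPat.cn c) (fun _ hq => by simp at hq)⟩

theorem Deriv.app_fn_of_rule {f : σ.FS} {p r x t : Exp σ} {θ : ℕ → Exp σ}
    (hr : ⟨f, [p], r⟩ ∈ P) (hθ : PSub θ) (hx : Deriv P x (subst θ p))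
    (hrt : Deriv P (subst θ r) t) : Deriv P (.app (.fn f) x) t := by
  obtain ⟨dx⟩ := hx
  obtain ⟨drt⟩ := hrt
  refine ⟨.opr _ hr θ hθ [x] [] t rfl (fun q hq => ?_) drt⟩
  obtain rfl : q = (x, subst θ p) := by simpa using hq
  exact dx

theorem Deriv.eq_bot_or_head_eq {e t : Exp σ} (d : Deriv P e t)
    (he : ∀ f, e.head ≠ .fn f) :
    t = .bot ∨ t.head = e.head ∧ t.args.length = e.args.length := by
  obtain ⟨d⟩ := d
  cases d with
  | bot => exact .inl rfl
  | rr => exact .inr ⟨rfl, rfl⟩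
  | dc h es ts hsym hlen => simp [hsym.head_eq, hsym.args_eq, hlen]
  | opr r => simp [Exp.head] at he

theorem not_deriv_app_of_head_eq_cn {a b : Exp σ} {c c' : σ.CS} (ha : a.head = .cn c) :
    ¬ Deriv P (.app a b) (.cn c') := fun d => by
  rcases d.eq_bot_or_head_eq (by simp [Exp.head, ha]) with h | ⟨-, h⟩
  · cases h
  · simp [Exp.args] at h

theorem cn_eq_of_deriv_cn_of_deriv_cn {c c' : σ.CS} {x : Exp σ} (h1 : Deriv P (.cn c) x)
    (h2 : Deriv P x (.cn c')) : c = c' := by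
  rcases h1.eq_bot_or_head_eq (by simp [Exp.head]) with rfl | ⟨hx, -⟩
  · rcases h2.eq_bot_or_head_eq (by simp [Exp.head]) with h | ⟨h, -⟩ <;> cases h
  · rcases h2.eq_bot_or_head_eq (by simp [hx, Exp.head]) with h | ⟨h, -⟩
    · cases h
    · simpa [hx, Exp.head] using h.symm

theorem Deriv.head_mem {A : Set (Exp σ)} (hbot : .bot ∉ A)
    (hA : ∀ r ∈ P, ∀ θ, (subst θ r.rhs).head ∈ A → .fn r.fn ∈ A)
    {e t : Exp σ} (d : Deriv P e t) (ht : t.head ∈ A) : e.head ∈ A := by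
  obtain ⟨d⟩ := d
  induction d with
  | bot => exact absurd ht hbot
  | rr => exact ht
  | dc => simpa using ht
  | opr r hr θ _ es as t _ _ _ _ ih =>
    simpa [Exp.head] using hA r hr θ (by simpa using ih ht)

theorem Deriv.app_fn_inv (hP : ∀ r ∈ P, r.lhs.length = σ.arityF r.fn) {f : σ.FS}
    (hf : σ.arityF f = 1) {x t : Exp σ} (d : Deriv P (.app (.fn f) x) t) (ht : t ≠ .bot) :
    ∃ r ∈ P, ∃ p θ, r.fn = f ∧ r.lhs = [p] ∧ PSub θ ∧
      Deriv P x (subst θ p) ∧ Deriv P (subst θ r.rhs) t := by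
  obtain ⟨d⟩ := d
  generalize he : Exp.app (.fn f) x = e at d
  cases d with
  | bot => exact absurd rfl ht
  | rr => cases he
  | dc h es ts hsym hlen hpat =>
    have hh : h = .fn f := by simpa [Exp.head, hsym.head_eq] using (congrArg Exp.head he).symm
    have hes : es = [x] := by simpa [Exp.args, hsym.args_eq] using (congrArg Exp.args he).symm
    have := hpat.length_args_lt (f := f) (by simp [hh, Exp.head])
    simp [← hlen, hes, hh, hf] at this
  | opr r hr θ hθ es as t hlen ds d =>
    have hrf : r.fn = f := by simpa [Exp.head] using (congrArg Exp.head he).symm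
    have hargs : es ++ as = [x] := by simpa [Exp.args] using (congrArg Exp.args he).symm
    obtain ⟨p, hp⟩ := List.length_eq_one_iff.1 ((hP r hr).trans (hrf ▸ hf))
    obtain ⟨rfl, rfl⟩ : es = [x] ∧ as = [] := by
      rw [hp] at hlen
      rcases List.append_eq_singleton_iff.1 hargs with ⟨rfl, -⟩ | h
      · simp at hlen
      · exact h
    refine ⟨r, hr, p, θ, hrf, hp, hθ, ⟨ds (x, subst θ p) (by simp [hp])⟩, ⟨d⟩⟩

end Deriv

theorem safeExt_union_singleton {P : Program σ} {r : Rule σ} {e : Exp σ}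
    (h : r.fn ∉ expFS e ∪ progFS P) : SafeExt P (P ∪ {r}) e := by
  refine ⟨{r}, rfl, Set.disjoint_singleton_right.2 fun hr => h (.inr ?_), ?_⟩
  · exact Set.mem_biUnion hr (Set.mem_insert _ _)
  · simpa [defs] using h

theorem mem_ex3Prog {r : Rule ex3Sig} :
    r ∈ ex3Prog ↔ r = ⟨.f, [.cn .c1], .cn .c2⟩ ∨
      r = ⟨.h, [.var 0], .app (.fn .f) (.app (.var 1) (.var 0))⟩ := by
  simp [ex3Prog]

theorem mem_ex3Prog' {r : Rule ex3Sig} :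
    r ∈ ex3Prog' ↔ r = ⟨.f, [.cn .c1], .cn .c2⟩ ∨
      r = ⟨.h, [.var 0], .app (.fn .f) (.app (.var 1) (.var 0))⟩ ∨
      r = ⟨.g, [.cn .c0], .cn .c1⟩ := by
  simp only [ex3Prog', Set.mem_union, mem_ex3Prog, Set.mem_singleton_iff, or_assoc]

theorem ex3Prog'_lhs_length : ∀ r ∈ ex3Prog', r.lhs.length = ex3Sig.arityF r.fn := by
  intro r hr
  rcases mem_ex3Prog'.1 hr with rfl | rfl | rfl <;> rfl

theorem ex3Prog_lhs_length : ∀ r ∈ ex3Prog, r.lhs.length = ex3Sig.arityF r.fn :=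
  fun r hr => ex3Prog'_lhs_length r (.inl hr)

theorem ex3Prog_not_deriv_app_c1 {a b : Exp ex3Sig} : ¬ Deriv ex3Prog (.app a b) (.cn .c1) := by
  intro d
  have hhead := d.head_mem (A := {.cn .c1}) (by simp) (fun r hr θ h => by
    rcases mem_ex3Prog.1 hr with rfl | rfl <;> cases h) rfl
  exact not_deriv_app_of_head_eq_cn (by simpa [Exp.head] using hhead) d

theorem ex3Prog_deriv_h_eq_bot {u t : Exp ex3Sig} (d : Deriv ex3Prog (.app (.fn .h) u) t) :
    t = .bot := by
  by_contra ht
  obtain ⟨r, hr, -, θ, hrh, -, -, -, hf⟩ := d.app_fn_inv ex3Prog_lhs_length rfl ht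
  rcases mem_ex3Prog.1 hr with rfl | rfl <;> cases hrh
  obtain ⟨r', hr', p, θ', hrf, hp, -, hx, -⟩ := hf.app_fn_inv ex3Prog_lhs_length rfl ht
  rcases mem_ex3Prog.1 hr' with rfl | rfl <;> cases hrf
  obtain rfl : p = .cn .c1 := by simpa using hp.symm
  exact ex3Prog_not_deriv_app_c1 hx

theorem ex3Prog'_head_of_deriv_c1 {e : Exp ex3Sig} (d : Deriv ex3Prog' e (.cn .c1)) :
    e.head = .cn .c1 ∨ e.head = .fn .g :=
  d.head_mem (A := {.cn .c1, .fn .g}) (by simp) (fun r hr θ h => by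
    rcases mem_ex3Prog'.1 hr with rfl | rfl | rfl <;> simp [subst, Exp.head] at h ⊢ <;> cases h)
    (.inl rfl)

theorem ex3Prog'_deriv_h0_c2 : Deriv ex3Prog' (.app (.fn .h) (.cn .c0)) (.cn .c2) := by
  have hg : Deriv ex3Prog' (.app (.fn .g) (.cn .c0)) (.cn .c1) :=
    .app_fn_of_rule (θ := fun _ => .bot) (mem_ex3Prog'.2 (.inr (.inr rfl))) (fun _ => .bot)
      (.cn_self _) (.cn_self _)
  have hf : Deriv ex3Prog' (.app (.fn .f) (.app (.fn .g) (.cn .c0))) (.cn .c2) :=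
    .app_fn_of_rule (θ := fun _ => .bot) (mem_ex3Prog'.2 (.inl rfl)) (fun _ => .bot)
      hg (.cn_self _)
  refine .app_fn_of_rule (θ := fun n => if n = 1 then .fn .g else .cn .c0)
    (mem_ex3Prog'.2 (.inr (.inl rfl))) (fun n => ?_) (.cn_self _) hf
  dsimp only
  split_ifs
  exacts [IsPPat.fn (σ := ex3Sig) (f := .g) Nat.one_pos, .cn _]

theorem ex3Prog'_not_deriv_h1_c2 : ¬ Deriv ex3Prog' (.app (.fn .h) (.cn .c1)) (.cn .c2) := by
  intro d
  obtain ⟨r, hr, p, θ, hrh, hp, hθ, h1, hf⟩ := d.app_fn_inv ex3Prog'_lhs_length rfl (by simp)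
  rcases mem_ex3Prog'.1 hr with rfl | rfl | rfl <;> cases hrh
  obtain rfl : p = .var 0 := by simpa using hp.symm
  obtain ⟨r', hr', p', θ', hrf, hp', -, hY, -⟩ :=
    hf.app_fn_inv ex3Prog'_lhs_length rfl (by simp)
  rcases mem_ex3Prog'.1 hr' with rfl | rfl | rfl <;> cases hrf
  obtain rfl : p' = .cn .c1 := by simpa using hp'.symm
  rcases ex3Prog'_head_of_deriv_c1 hY with hc | hg
  · exact not_deriv_app_of_head_eq_cn (by simpa [subst, Exp.head] using hc) hY
  · have hθ1 : θ 1 = .fn .g :=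
      (hθ 1).eq_fn_of_head_eq (by simpa [subst, Exp.head] using hg) le_rfl
    have hgY : Deriv ex3Prog' (.app (.fn .g) (θ 0)) (.cn .c1) := by simpa [subst, hθ1] using hY
    obtain ⟨r'', hr'', p'', θ'', hrg, hp'', -, h0, -⟩ :=
      hgY.app_fn_inv ex3Prog'_lhs_length rfl (by simp)
    rcases mem_ex3Prog'.1 hr'' with rfl | rfl | rfl <;> cases hrg
    obtain rfl : p'' = .cn .c0 := by simpa using hp''.symm
    cases cn_eq_of_deriv_cn_of_deriv_cn h1 h0

/-- **Example 3**: for every partial pattern `φ`,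
`1 ∉ ⟦φ 0⟧^P ∪ ⟦φ 1⟧^P`, hence `⟦h 0⟧^P = {⊥} = ⟦h 1⟧^P`; but for the safe
extension `P' = P ⊎ { g 0 → 1 }`, `2 ∈ ⟦h 0⟧^{P'}` while `2 ∉ ⟦h 1⟧^{P'}`:
extra variables destroy full abstraction even with constructors of every
needed arity. -/
theorem ex3_fullAbstraction_fails :
    (∀ φ : Exp ex3Sig, IsPPat φ →
      Exp.cn Ex3C.c1 ∉
        den ex3Prog (.app φ (.cn .c0)) ∪ den ex3Prog (.app φ (.cn .c1))) ∧
    den ex3Prog (.app (.fn .h) (.cn .c0)) = {Exp.bot} ∧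
    den ex3Prog (.app (.fn .h) (.cn .c1)) = {Exp.bot} ∧
    SafeExt ex3Prog ex3Prog' (.app (.fn .h) (.cn .c0)) ∧
    SafeExt ex3Prog ex3Prog' (.app (.fn .h) (.cn .c1)) ∧
    (Exp.cn Ex3C.c2 ∈ den ex3Prog' (.app (.fn .h) (.cn .c0))) ∧
    (Exp.cn Ex3C.c2 ∉ den ex3Prog' (.app (.fn .h) (.cn .c1))) := by
  have hsafe (c : Ex3C) : SafeExt ex3Prog ex3Prog' (.app (.fn .h) (.cn c)) :=
    safeExt_union_singleton <| by
      simp [expFS, progFS, ruleFS, ex3Prog]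
      rintro (h | (h | h) | h | h) <;> cases h
  have hden (c : Ex3C) : den ex3Prog (.app (.fn .h) (.cn c)) = {Exp.bot} :=
    den_eq_singleton_bot fun _ => ex3Prog_deriv_h_eq_bot
  refine ⟨fun φ _ => ?_, hden _, hden _, hsafe _, hsafe _,
    ⟨.cn _, ex3Prog'_deriv_h0_c2⟩, fun h => ex3Prog'_not_deriv_h1_c2 h.2⟩
  rintro (h | h) <;> exact ex3Prog_not_deriv_app_c1 h.2
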